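/- arXiv:2210.08483 — 4 statements merged into one kernel-verified Lean document; each statement's English description precedes it below -/
import Mathlib

section
/- If two of the roots of a monic degree-n polynomial satisfy λ_i + λ_j = 0 for some i ≠ j, then the leading principal (n−1)×(n−1) minor of its Hurwitz matrix vanishes: det(H_{n−1}^{(n)}) = 0. -/
open Finset

/-- Signed elementary symmetric coefficients of the monic polynomial
`∏ i, (s - lam i)`:  `a k = (-1)^k e_k(lam)` for `0 ≤ k ≤ n`, and `0` otherwise
(so `a 0 = 1`). -/
def acoef {R : Type*} [CommRing R] (n : ℕ) (lam : Fin n → R) (k : ℤ) : R :=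
  if 0 ≤ k ∧ k ≤ (n : ℤ) then
    (-1 : R) ^ k.toNat *
      ∑ s ∈ Finset.powersetCard k.toNat (Finset.univ : Finset (Fin n)), ∏ i ∈ s, lam i
  else 0

/-- The `n × n` Hurwitz matrix of the monic polynomial with roots `lam`:
its (1-based) `(i,j)` entry is `a_{2j - i}`. -/
def hurwitz {R : Type*} [CommRing R] (n : ℕ) (lam : Fin n → R) :
    Matrix (Fin n) (Fin n) R :=
  Matrix.of fun i j => acoef n lam (2 * (j : ℤ) - (i : ℤ) + 1)

/-- Coefficients of a polynomial, extended by zero to negative integer indices. -/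
noncomputable def extc {R : Type*} [Semiring R] (p : Polynomial R) (t : ℤ) : R :=
  if 0 ≤ t then p.coeff t.toNat else 0

lemma extc_of_neg {R : Type*} [Semiring R] (p : Polynomial R) {t : ℤ} (h : t < 0) :
    extc p t = 0 := by
  simp [extc, not_le.mpr h]

lemma extc_of_nonneg {R : Type*} [Semiring R] (p : Polynomial R) {t : ℤ} (h : 0 ≤ t) :
    extc p t = p.coeff t.toNat := by
  simp [extc, h]

/-- If two roots sum to zero, the leading principal `(n-1) × (n-1)` minor of the
Hurwitz matrix vanishes. -/
theorem det_hurwitz_leading_minor_eq_zero {F : Type*} [Field F]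
    (m : ℕ) (lam : Fin (m + 1) → F) (i j : Fin (m + 1)) (hij : i ≠ j)
    (hsum : lam i + lam j = 0) :
    ((hurwitz (m + 1) lam).submatrix Fin.castSucc Fin.castSucc).det = 0 := by
  classical
  have hm : 1 ≤ m := by
    rcases Nat.eq_zero_or_pos m with h | h
    · subst h; exact absurd (Fin.eq_of_val_eq (by omega)) hij
    · exact h
  set μ : F := lam i with hμ
  have hlamj : lam j = -μ := by
    exact eq_neg_of_add_eq_zero_right hsum
  set c : F := lam i * lam j with hcdef
  have hc : c = -(μ ^ 2) := by
    rw [hcdef, hlamj, ← hμ]; ring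
  set P : Polynomial F := ∏ k : Fin (m + 1), (Polynomial.X - Polynomial.C (lam k)) with hPdef
  set Q : Polynomial F :=
      ∏ k ∈ ({i, j} : Finset (Fin (m + 1)))ᶜ, (Polynomial.X - Polynomial.C (lam k)) with hQdef
  -- degree bounds
  have hdegP : P.natDegree ≤ m + 1 := by
    refine le_trans (Polynomial.natDegree_prod_le _ _) ?_
    simp [Polynomial.natDegree_X_sub_C]
  have hdegQ : Q.natDegree < m := by
    have hcard : (({i, j} : Finset (Fin (m + 1)))ᶜ).card = m - 1 := by
      rw [Finset.card_compl, Finset.card_pair hij, Fintype.card_fin]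
      omega
    have hsumdeg : (∑ k ∈ ({i, j} : Finset (Fin (m + 1)))ᶜ,
        (Polynomial.X - Polynomial.C (lam k)).natDegree) = m - 1 := by
      simp only [Polynomial.natDegree_X_sub_C]
      rw [Finset.sum_const, smul_eq_mul, mul_one, hcard]
    exact lt_of_le_of_lt (le_trans (Polynomial.natDegree_prod_le _ _) hsumdeg.le)
      (by omega)
  -- factorization
  have hP : P = (Polynomial.X ^ 2 + Polynomial.C c) * Q := by
    rw [hPdef, ← Finset.prod_mul_prod_compl ({i, j} : Finset (Fin (m + 1))), ← hQdef,
      Finset.prod_pair hij]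
    congr 1
    have : (Polynomial.X - Polynomial.C (lam i)) * (Polynomial.X - Polynomial.C (lam j)) =
        Polynomial.X ^ 2 - (Polynomial.C (lam i) + Polynomial.C (lam j)) * Polynomial.X +
          Polynomial.C (lam i) * Polynomial.C (lam j) := by ring
    rw [this, ← Polynomial.C_add, hsum, Polynomial.C_0, zero_mul, sub_zero, ← Polynomial.C_mul,
      ← hcdef]
  -- acoef in terms of extended coefficients of P
  have hacoef : ∀ k : ℤ, acoef (m + 1) lam k = extc P ((m : ℤ) + 1 - k) := by
    intro k
    by_cases hk : 0 ≤ k ∧ k ≤ ((m + 1 : ℕ) : ℤ)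
    · have hk1 : 0 ≤ k := hk.1
      have hk2 : k ≤ (m : ℤ) + 1 := by exact_mod_cast hk.2
      have ht : (0 : ℤ) ≤ (m : ℤ) + 1 - k := by omega
      rw [acoef, if_pos (by exact_mod_cast hk), extc_of_nonneg _ ht]
      have hPm : P = (Multiset.map (fun t => Polynomial.X - Polynomial.C t)
          (Multiset.map lam Finset.univ.val)).prod := by
        rw [Multiset.map_map, hPdef]; rfl
      have hcard : Multiset.card (Multiset.map lam Finset.univ.val) = m + 1 := by
        simp
      have hle : ((m : ℤ) + 1 - k).toNat ≤ Multiset.card (Multiset.map lam Finset.univ.val) := by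
        rw [hcard]; omega
      rw [hPm, Multiset.prod_X_sub_C_coeff _ hle, hcard]
      have h1 : m + 1 - ((m : ℤ) + 1 - k).toNat = k.toNat := by omega
      rw [h1, Finset.esymm_map_val]
    · rw [acoef, if_neg hk]
      rcases not_and_or.mp hk with h | h
    -- k < 0 : index above degree
      · have hk' : k < 0 := by omega
        have ht : (0 : ℤ) ≤ (m : ℤ) + 1 - k := by omega
        rw [extc_of_nonneg _ ht]
        refine (Polynomial.coeff_eq_zero_of_natDegree_lt ?_).symm
        omega
      · have hk' : ((m + 1 : ℕ) : ℤ) < k := by omega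
        have ht : (m : ℤ) + 1 - k < 0 := by push_cast at hk'; omega
        rw [extc_of_neg _ ht]
  -- coefficient recursion from the factorization
  have hrec : ∀ t : ℤ, extc P t = extc Q (t - 2) + c * extc Q t := by
    intro t
    by_cases ht : 0 ≤ t
    · rw [extc_of_nonneg _ ht, hP, add_mul, Polynomial.coeff_add, mul_comm (Polynomial.X ^ 2) Q,
        Polynomial.coeff_mul_X_pow', Polynomial.coeff_C_mul, extc_of_nonneg _ ht]
      by_cases h2 : 2 ≤ t.toNat
      · rw [if_pos h2, extc_of_nonneg _ (show (0:ℤ) ≤ t - 2 by omega)]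
        congr 2
        omega
      · rw [if_neg h2, extc_of_neg _ (show t - 2 < 0 by omega)]
    · push_neg at ht
      rw [extc_of_neg _ ht, extc_of_neg _ (show t - 2 < 0 by omega), extc_of_neg _ ht]
      ring
  -- kernel vector
  rw [← Matrix.exists_mulVec_eq_zero_iff]
  refine ⟨fun j : Fin m => μ ^ (2 * (m - 1 - (j : ℕ))), ?_, ?_⟩
  · intro h0
    have := congrFun h0 ⟨m - 1, by omega⟩
    simp only [Pi.zero_apply] at this
    rw [show 2 * (m - 1 - ((⟨m - 1, by omega⟩ : Fin m) : ℕ)) = 0 by simp, pow_zero] at this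
    exact one_ne_zero this
  · funext r
    show (∑ t : Fin m, _ * _) = _
    have hterm : ∀ t : Fin m,
        ((hurwitz (m + 1) lam).submatrix Fin.castSucc Fin.castSucc) r t
            * μ ^ (2 * (m - 1 - (t : ℕ)))
          = extc P ((m : ℤ) + (r : ℕ) - 2 * (t : ℕ)) * μ ^ (2 * (m - 1 - (t : ℕ))) := by
      intro t
      congr 1
      rw [Matrix.submatrix_apply, hurwitz, Matrix.of_apply, hacoef]
      congr 1
      simp only [Fin.coe_castSucc]
      push_cast
      ring
    rw [Finset.sum_congr rfl fun t _ => hterm t]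
    rw [Fin.sum_univ_eq_sum_range
      (fun t : ℕ => extc P ((m : ℤ) + (r : ℕ) - 2 * t) * μ ^ (2 * (m - 1 - t))) m]
    have key : ∀ t ∈ Finset.range m,
        extc P ((m : ℤ) + (r : ℕ) - 2 * t) * μ ^ (2 * (m - 1 - t))
          = (fun u : ℕ => extc Q ((m : ℤ) + (r : ℕ) - 2 * u) * μ ^ (2 * (m - u))) (t + 1)
            - (fun u : ℕ => extc Q ((m : ℤ) + (r : ℕ) - 2 * u) * μ ^ (2 * (m - u))) t := by
      intro t htm
      have htm' : t < m := Finset.mem_range.mp htm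
      simp only
      rw [hrec, hc]
      have hA : (m : ℤ) + (r : ℕ) - 2 * ((t : ℕ) + 1 : ℕ) = (m : ℤ) + (r : ℕ) - 2 * t - 2 := by
        omega
      have he1 : 2 * (m - (t + 1)) = 2 * (m - 1 - t) := by omega
      have he2 : 2 * (m - t) = 2 * (m - 1 - t) + 2 := by omega
      rw [hA, he1, he2, pow_add]
      ring
    rw [Finset.sum_congr rfl key,
      Finset.sum_range_sub (fun u : ℕ => extc Q ((m : ℤ) + (r : ℕ) - 2 * u) * μ ^ (2 * (m - u))) m]
    have hGm : extc Q ((m : ℤ) + (r : ℕ) - 2 * m) = 0 := by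
      refine extc_of_neg _ ?_
      have : (r : ℕ) < m := r.isLt
      omega
    have hG0 : extc Q ((m : ℤ) + (r : ℕ)) = 0 := by
      rw [extc_of_nonneg _ (by omega)]
      refine Polynomial.coeff_eq_zero_of_natDegree_lt ?_
      omega
    simp [hGm, hG0]
end

section
/- For each pair i < j, the polynomial λ_i + λ_j divides det(H_{n−1}^{(n)}) in the polynomial ring ℝ[λ_1, ..., λ_n], where H_{n−1}^{(n)} is the leading principal (n−1)×(n−1) submatrix of the Hurwitz matrix of ∏_{i=1}^n (s − λ_i). Consequently, ∏_{1 ≤ i < j ≤ n} (λ_i + λ_j) divides det(H_{n−1}^{(n)}). -/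
open Finset

/-!
If `λ_a = l ≠ 0` and `λ_b = -l`, the vector `v_j = l^(2(m-j))` lies in the kernel of the leading
`m × m` minor of the Hurwitz matrix (`n = m + 1`): twice the `r`-th entry of the minor applied
to `v` is `l^(m-r) f(l) + (-l)^(m-r) f(-l)`, since the terms of odd degree cancel and the
coefficient of `l^(2(m-j))` is `a_{2j-r+1}`. So the minor vanishes after the substitution
`λ_j ↦ -λ_i`, which means that `λ_i + λ_j` divides it. The linear forms `λ_i + λ_j` are
irreducible and involve different pairs of variables, hence are pairwise coprime, and their
product divides as well.
-/

section Hurwitz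

open Matrix

variable {R : Type*} [CommRing R] {n : ℕ}

theorem acoef_eq_zero {lam : Fin n → R} {k : ℤ} (hk : k < 0 ∨ (n : ℤ) < k) :
    acoef n lam k = 0 :=
  if_neg (by omega)

theorem map_acoef {S : Type*} [CommRing S] (g : R →+* S) (lam : Fin n → R) (k : ℤ) :
    g (acoef n lam k) = acoef n (g ∘ lam) k := by
  unfold acoef
  split_ifs <;> simp [map_prod]

theorem hurwitz_map {S : Type*} [CommRing S] (g : R →+* S) (lam : Fin n → R) :
    (hurwitz n lam).map g = hurwitz n (g ∘ lam) := by
  ext i j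
  exact map_acoef g lam _

theorem prod_sub_eq_sum_acoef (lam : Fin n → R) (x : R) :
    ∏ t, (x - lam t) = ∑ k ∈ range (n + 1), acoef n lam k * x ^ (n - k) := by
  have := congrArg (Polynomial.eval x)
    (Multiset.prod_X_sub_X_eq_sum_esymm ((univ : Finset (Fin n)).val.map lam))
  simp only [Polynomial.eval_multiset_prod, Multiset.map_map, Function.comp_def,
    Polynomial.eval_sub, Polynomial.eval_X, Polynomial.eval_C, Polynomial.eval_finsetSum,
    Polynomial.eval_mul, Polynomial.eval_pow, Polynomial.eval_neg, Polynomial.eval_one,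
    Multiset.card_map, card_val, card_univ, Fintype.card_fin, esymm_map_val] at this
  rw [prod_eq_multiset_prod, this]
  refine sum_congr rfl fun k hk => ?_
  rw [acoef, if_pos (by simp at hk; omega)]
  simp [mul_assoc]

theorem sum_range_mul_one_add_neg_one_pow {m r : ℕ} (hr : r < m) (c : ℤ → R)
    (hc : ∀ k, k < 0 ∨ (m + 1 : ℤ) < k → c k = 0) (x : R) :
    ∑ k ∈ range (m + 2),
        c k * ((1 + (-1) ^ (m - r + (m + 1 - k))) * x ^ (m - r + (m + 1 - k))) =
      2 * ∑ j ∈ range m, c (2 * j - r + 1) * x ^ (2 * (m - j)) := by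
  have h_even : ∀ k ∈ range (m + 2),
      c k * ((1 + (-1) ^ (m - r + (m + 1 - k))) * x ^ (m - r + (m + 1 - k))) ≠ 0 →
        (m - r + (m + 1 - k)) % 2 = 0 := by
    intro k _ hne
    by_contra h_ne_even
    have h_odd : Odd (m - r + (m + 1 - k)) := Nat.odd_iff.mpr (by omega)
    simp [h_odd.neg_one_pow] at hne
  have h_supp : ∀ j ∈ range m, 2 * (c (2 * j - r + 1) * x ^ (2 * (m - j))) ≠ 0 →
      r ≤ 2 * j + 1 ∧ 2 * j + 1 ≤ m + 1 + r := by
    intro j _ hne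
    by_contra hout
    simp [hc (2 * j - r + 1) (by omega)] at hne
  rw [mul_sum, ← sum_filter_of_ne h_even, ← sum_filter_of_ne h_supp]
  refine sum_nbij' (fun k => (k + r - 1) / 2) (fun j => 2 * j + 1 - r) ?_ ?_ ?_ ?_ ?_ <;>
    simp only [mem_filter, mem_range]
  · omega
  · omega
  · omega
  · omega
  · intro k hk
    have harg : 2 * (((k + r - 1) / 2 : ℕ) : ℤ) - r + 1 = k := by omega
    have hexp : 2 * (m - (k + r - 1) / 2) = m - r + (m + 1 - k) := by omega
    rw [harg, hexp, (Nat.even_iff.mpr hk.2).neg_one_pow]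
    ring

theorem two_mul_hurwitz_leading_minor_mulVec {m : ℕ} (lam : Fin (m + 1) → R) (l : R)
    (r : Fin m) :
    2 * ((hurwitz (m + 1) lam).submatrix Fin.castSucc Fin.castSucc *ᵥ
        fun j => l ^ (2 * (m - j))) r =
      l ^ (m - r) * ∏ t, (l - lam t) + (-l) ^ (m - r) * ∏ t, (-l - lam t) := by
  have h_term : ∀ p q : ℕ, ∀ a : R,
      l ^ p * (a * l ^ q) + (-l) ^ p * (a * (-l) ^ q) =
        a * ((1 + (-1) ^ (p + q)) * l ^ (p + q)) := by
    intro p q a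
    rw [neg_pow l p, neg_pow l q, pow_add, pow_add]
    ring
  simp only [prod_sub_eq_sum_acoef, mul_sum, ← sum_add_distrib, h_term]
  rw [sum_range_mul_one_add_neg_one_pow r.isLt _ (fun k hk => acoef_eq_zero hk)]
  simp only [mulVec, dotProduct, submatrix_apply, hurwitz, of_apply, Fin.val_castSucc]
  exact congrArg (2 * ·) <| Fin.sum_univ_eq_sum_range
    (fun j => acoef (m + 1) lam (2 * (j : ℤ) - r + 1) * l ^ (2 * (m - j))) m

theorem det_hurwitz_leading_minor_eq_zero_of_opposite_roots [IsDomain R] [NeZero (2 : R)] {m : ℕ}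
    {lam : Fin (m + 1) → R} {l : R} (hl : l ≠ 0) {a b : Fin (m + 1)} (ha : lam a = l)
    (hb : lam b = -l) :
    ((hurwitz (m + 1) lam).submatrix Fin.castSucc Fin.castSucc).det = 0 := by
  have hab : a ≠ b := by
    rintro rfl
    have h2l : (2 : R) * l = 0 := by linear_combination ha.symm.trans hb
    exact hl ((mul_eq_zero.mp h2l).resolve_left two_ne_zero)
  have hm : 0 < m := Nat.pos_of_ne_zero fun h => hab (by subst h; exact Fin.ext (by omega))
  rw [← exists_mulVec_eq_zero_iff]
  refine ⟨fun j => l ^ (2 * (m - j)), fun h => pow_ne_zero _ hl (congrFun h ⟨0, hm⟩), ?_⟩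
  ext r
  have h_root : ∏ t, (l - lam t) = 0 := prod_eq_zero (mem_univ a) (by rw [ha, sub_self])
  have h_neg_root : ∏ t, (-l - lam t) = 0 := prod_eq_zero (mem_univ b) (by rw [hb, sub_self])
  have := two_mul_hurwitz_leading_minor_mulVec lam l r
  rw [h_root, h_neg_root, mul_zero, mul_zero, add_zero] at this
  exact (mul_eq_zero.mp this).resolve_left two_ne_zero

end Hurwitz

namespace MvPolynomial

variable {σ R : Type*} [CommRing R]

theorem X_sub_dvd_sub_aeval_update [DecidableEq σ] (p : MvPolynomial σ R) (j : σ)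
    (c : MvPolynomial σ R) : X j - c ∣ p - aeval (Function.update X j c) p := by
  set u := Function.update (X : σ → MvPolynomial σ R) j c
  induction p using MvPolynomial.induction_on with
  | C a => simp
  | add p q hp hq => rw [map_add, add_sub_add_comm]; exact dvd_add hp hq
  | mul_X p k hp =>
    have hk : X j - c ∣ X k - u k := by
      rcases eq_or_ne k j with rfl | hkj
      · simp [u]
      · simp [u, Function.update_of_ne hkj]
    rw [map_mul, aeval_X,
      show p * X k - aeval u p * u k = (p - aeval u p) * X k + aeval u p * (X k - u k) by ring]
    exact dvd_add (dvd_mul_of_dvd_left hp _) (dvd_mul_of_dvd_right hk _)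

theorem X_add_X_dvd_of_aeval_update_eq_zero [DecidableEq σ] {i j : σ} {p : MvPolynomial σ R}
    (hp : aeval (Function.update (X : σ → MvPolynomial σ R) j (-X i)) p = 0) :
    X i + X j ∣ p := by
  simpa only [hp, sub_zero, sub_neg_eq_add, add_comm] using X_sub_dvd_sub_aeval_update p j (-X i)

theorem irreducible_X_add_X [IsDomain R] {i j : σ} (hij : i ≠ j) :
    Irreducible (X i + X j : MvPolynomial σ R) := by
  classical
  have : (X i + X j : MvPolynomial σ R) = sumSMulX (Finsupp.single i 1 + Finsupp.single j 1) := by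
    simp [sumSMulX]
  rw [this]
  refine irreducible_sumSMulX _ ⟨i, by simp [hij.symm]⟩ fun r hr => isUnit_of_dvd_one ?_
  simpa [hij.symm] using hr i

theorem vars_X_add_X [DecidableEq σ] [Nontrivial R] {i j : σ} (hij : i ≠ j) :
    (X i + X j : MvPolynomial σ R).vars = {i, j} := by
  rw [vars_add_of_disjoint (by simpa [vars_X] using hij), vars_X, vars_X]
  rfl

theorem vars_subset_of_dvd [IsDomain R] {p q : MvPolynomial σ R} (hq : q ≠ 0) (h : p ∣ q) :
    p.vars ⊆ q.vars := by
  obtain ⟨r, rfl⟩ := h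
  intro i hi
  rw [mem_vars_iff_degreeOf_ne_zero] at hi ⊢
  rw [degreeOf_mul_eq (left_ne_zero_of_mul hq) (right_ne_zero_of_mul hq)]
  omega

theorem isRelPrime_X_add_X [IsDomain R] [LinearOrder σ] {i j k l : σ} (hij : i < j) (hkl : k < l)
    (hne : (i, j) ≠ (k, l)) : IsRelPrime (X i + X j : MvPolynomial σ R) (X k + X l) := by
  rw [(irreducible_X_add_X hij.ne).isRelPrime_iff_not_dvd]
  intro h
  have := vars_subset_of_dvd (irreducible_X_add_X (R := R) hkl.ne).ne_zero h
  rw [vars_X_add_X hij.ne, vars_X_add_X hkl.ne] at this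
  simp only [insert_subset_iff, mem_insert, mem_singleton, singleton_subset_iff] at this
  obtain ⟨rfl | rfl, rfl | rfl⟩ := this <;> order

theorem prod_X_add_X_dvd [IsDomain R] [DecompositionMonoid (MvPolynomial σ R)] [Fintype σ]
    [LinearOrder σ] {p : MvPolynomial σ R} (h : ∀ i j, i < j → X i + X j ∣ p) :
    ∏ i, ∏ j ∈ univ.filter (fun j => i < j), (X i + X j) ∣ p := by
  have h_flatten : ∏ i, ∏ j ∈ univ.filter (fun j => i < j), (X i + X j : MvPolynomial σ R) =
      ∏ q ∈ univ.filter (fun q : σ × σ => q.1 < q.2), (X q.1 + X q.2) := by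
    rw [prod_filter, ← univ_product_univ, prod_product]
    simp_rw [prod_filter]
  rw [h_flatten]
  refine prod_dvd_of_isRelPrime (fun q hq q' hq' hne => ?_) fun q hq => h _ _ (mem_filter.mp hq).2
  exact isRelPrime_X_add_X (mem_filter.mp hq).2 (mem_filter.mp hq').2 hne

end MvPolynomial

open MvPolynomial in
theorem X_add_X_dvd_det_hurwitz_leading_minor {R : Type*} [CommRing R] [IsDomain R] [CharZero R]
    {m : ℕ} {i j : Fin (m + 1)} (hij : i ≠ j) :
    X i + X j ∣ ((hurwitz (m + 1) (X : Fin (m + 1) → MvPolynomial (Fin (m + 1)) R)).submatrix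
      Fin.castSucc Fin.castSucc).det := by
  classical
  apply X_add_X_dvd_of_aeval_update_eq_zero
  rw [← AlgHom.coe_toRingHom, RingHom.map_det, RingHom.mapMatrix_apply, ← Matrix.submatrix_map,
    hurwitz_map]
  exact det_hurwitz_leading_minor_eq_zero_of_opposite_roots (X_ne_zero i) (a := i) (b := j)
    (by simp [Function.update_of_ne hij]) (by simp)

open MvPolynomial in
/-- Each `λ_i + λ_j` (for `i < j`) divides the leading principal `(n-1)`-minor of
the Hurwitz matrix of `∏ i, (s - λ_i)` in `ℝ[λ_1, …, λ_n]`, and consequently so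
does the product `∏_{i<j} (λ_i + λ_j)`. -/
theorem lambda_sum_dvd_det_hurwitz_leading_minor (m : ℕ) :
    (∀ i j : Fin (m + 1), i < j →
      (X i + X j : MvPolynomial (Fin (m + 1)) ℝ) ∣
        ((hurwitz (m + 1) (fun i => (X i : MvPolynomial (Fin (m + 1)) ℝ))).submatrix
          Fin.castSucc Fin.castSucc).det) ∧
    ((∏ i : Fin (m + 1), ∏ j ∈ Finset.univ.filter (fun j => i < j),
        (X i + X j : MvPolynomial (Fin (m + 1)) ℝ)) ∣
      ((hurwitz (m + 1) (fun i => (X i : MvPolynomial (Fin (m + 1)) ℝ))).submatrix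
        Fin.castSucc Fin.castSucc).det) := by
  have h_pairs := fun (i j : Fin (m + 1)) (hij : i < j) =>
    X_add_X_dvd_det_hurwitz_leading_minor (R := ℝ) hij.ne
  exact ⟨h_pairs, prod_X_add_X_dvd h_pairs⟩
end

section
/- Let A be an n×n real matrix with n distinct negative real eigenvalues λ_1, ..., λ_n, diagonalized as A = P diag(λ_1,...,λ_n) P^{−1}, and let b ∈ ℝ^n with P^{−1} b = (β_1, ..., β_n)^T. Then the infinite-horizon controllability Gramian G_∞ = ∫_0^∞ e^{At} b b^T e^{A^T t} dt satisfies det(G_∞) = det(P)^2 · det(M), where M is the n×n matrix with entries M_{ij} = −β_i β_j / (λ_i + λ_j), and det(M) = (∏_i β_i^2) · ∏_{i<j} (λ_i − λ_j)^2 / ∏_{i,j} (−(λ_i + λ_j)) by the Cauchy determinant formula. -/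
open Matrix MeasureTheory Finset

/-!
With `β = P⁻¹ b` we have `e^{tA} b = P (e^{λ_k t} β_k)_k`, so the Gramian is `P M Pᵀ`, where `M`
is the entrywise integral of `β_k β_l e^{(λ_k + λ_l) t}`. In turn `M = diag β · C · diag β` for
the Cauchy matrix `C = [1 / (a_i - b_j)]` with `a = -λ`, `b = λ`.

For the Cauchy determinant, let `S` be the coefficient matrix of the nodal polynomials
`p_j = ∏_{m ≠ j} (X - b_m)`. Evaluating them at the nodes gives `V(a) S = diag(∏_m (a_i - b_m)) C`
and `V(b) S = diag(p_j(b_j))`, so `det C` follows from two Vandermonde determinants.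
-/

section Cauchy

open Polynomial Lagrange

variable {K : Type*} [Field K] {N : ℕ}

theorem Matrix.vandermonde_mul_of_coeff (x : Fin N → K) (p : Fin N → K[X])
    (hp : ∀ j, (p j).natDegree < N) :
    vandermonde x * of (fun (k j : Fin N) => (p j).coeff k) = of fun i j => (p j).eval (x i) := by
  ext i j
  rw [mul_apply, of_apply, eval_eq_sum_range' (hp j), ← Fin.sum_univ_eq_sum_range]
  simp only [vandermonde_apply, of_apply, mul_comm]

theorem Lagrange.natDegree_nodal_erase_lt (b : Fin N → K) (j : Fin N) :
    (nodal (univ.erase j) b).natDegree < N := by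
  rw [natDegree_nodal, card_erase_of_mem (mem_univ j), card_univ, Fintype.card_fin]
  exact Nat.sub_lt j.pos one_pos

theorem prod_prod_erase_sub_eq_mul_det_vandermonde (b : Fin N → K) :
    ∏ j, ∏ m ∈ univ.erase j, (b j - b m)
      = (∏ i, ∏ j ∈ Ioi i, (b i - b j)) * (vandermonde b).det := by
  rw [det_vandermonde, ← prod_mul_distrib]
  simp_rw [← prod_mul_distrib, prod_prod_Ioi_mul_eq_prod_prod_off_diag (fun j i => b i - b j),
    compl_eq_univ_sdiff, sdiff_singleton_eq_erase]

theorem Matrix.det_cauchy_of_injective (a b : Fin N → K) (hb : Function.Injective b)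
    (hab : ∀ i j, a i - b j ≠ 0) :
    (of fun i j => (a i - b j)⁻¹).det
      = (∏ i, ∏ j ∈ Ioi i, (a j - a i) * (b i - b j)) / ∏ i, ∏ j, (a i - b j) := by
  set S : Matrix (Fin N) (Fin N) K := of fun k j => (nodal (univ.erase j) b).coeff k
  have hVa : vandermonde a * S
      = diagonal (fun i => ∏ m, (a i - b m)) * of fun i j => (a i - b j)⁻¹ := by
    rw [vandermonde_mul_of_coeff _ _ (natDegree_nodal_erase_lt b)]
    ext i j
    simp only [diagonal_mul, of_apply, eval_nodal, ← prod_erase_mul _ _ (mem_univ j),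
      mul_inv_cancel_right₀ (hab i j)]
  have hVb : vandermonde b * S = diagonal fun j => ∏ m ∈ univ.erase j, (b j - b m) := by
    rw [vandermonde_mul_of_coeff _ _ (natDegree_nodal_erase_lt b)]
    ext l j
    rcases eq_or_ne l j with rfl | hlj
    · simp [eval_nodal]
    · simp [eval_nodal_at_node (mem_erase.2 ⟨hlj, mem_univ l⟩), hlj]
  have hdetVb : (vandermonde b).det ≠ 0 := det_vandermonde_ne_zero_iff.2 hb
  have hdetS : S.det = ∏ i, ∏ j ∈ Ioi i, (b i - b j) := by
    have := congrArg det hVb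
    rw [det_mul, det_diagonal, prod_prod_erase_sub_eq_mul_det_vandermonde, mul_comm] at this
    exact mul_right_cancel₀ hdetVb this
  have hden : ∏ i, ∏ j, (a i - b j) ≠ 0 :=
    prod_ne_zero_iff.2 fun i _ => prod_ne_zero_iff.2 fun j _ => hab i j
  have := congrArg det hVa
  rw [det_mul, det_mul, det_diagonal, det_vandermonde, hdetS] at this
  rw [eq_div_iff hden, mul_comm, ← this]
  simp_rw [prod_mul_distrib]

theorem Matrix.det_cauchy (a b : Fin N → K) (hab : ∀ i j, a i - b j ≠ 0) :
    (of fun i j => (a i - b j)⁻¹).det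
      = (∏ i, ∏ j ∈ Ioi i, (a j - a i) * (b i - b j)) / ∏ i, ∏ j, (a i - b j) := by
  by_cases hb : Function.Injective b
  · exact det_cauchy_of_injective a b hb hab
  obtain ⟨i, j, hbij, hne⟩ := Function.not_injective_iff.1 hb
  wlog hij : i < j generalizing i j
  · exact this j i hbij.symm hne.symm (hne.lt_or_gt.resolve_left hij)
  rw [det_zero_of_column_eq hij.ne (fun k => by simp [hbij]), eq_comm, div_eq_zero_iff]
  refine Or.inl (prod_eq_zero (mem_univ i) (prod_eq_zero (mem_Ioi.2 hij) ?_))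
  rw [hbij, sub_self, mul_zero]

theorem Matrix.det_of_neg_mul_div_add (lam beta : Fin N → K) (hlam : ∀ i j, lam i + lam j ≠ 0) :
    (of fun i j => -(beta i * beta j) / (lam i + lam j)).det
      = (∏ i, beta i ^ 2) * (∏ i, ∏ j ∈ Ioi i, (lam i - lam j) ^ 2)
        / ∏ i, ∏ j, (-(lam i + lam j)) := by
  have hab : ∀ i j, -lam i - lam j ≠ 0 := fun i j => by
    rw [← neg_add']; exact neg_ne_zero.2 (hlam i j)
  have hM : (of fun i j => -(beta i * beta j) / (lam i + lam j))
      = diagonal beta * (of fun i j => (-lam i - lam j)⁻¹) * diagonal beta := by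
    ext i j
    rw [mul_diagonal, diagonal_mul, of_apply, of_apply, ← neg_add', inv_neg, div_eq_mul_inv]
    ring
  have hnum : ∀ i j, (-lam j - -lam i) * (lam i - lam j) = (lam i - lam j) ^ 2 :=
    fun i j => by ring
  rw [hM, det_mul, det_mul, det_diagonal, det_cauchy _ _ hab]
  simp_rw [hnum, ← neg_add', sq (beta _), prod_mul_distrib]
  ring

end Cauchy

theorem Matrix.mul_vecMulVec_mul_transpose {m n α : Type*} [Fintype n] [CommSemiring α]
    (M : Matrix m n α) (v : n → α) : M * vecMulVec v v * Mᵀ = vecMulVec (M *ᵥ v) (M *ᵥ v) := by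
  rw [mul_vecMulVec, vecMulVec_mul, vecMul_transpose]

theorem Matrix.integral_mul_mul_apply {X ι κ κ' ι' : Type*} [Fintype κ] [Fintype κ']
    [MeasurableSpace X] {μ : Measure X} (P : Matrix ι κ ℝ) (F : X → Matrix κ κ' ℝ)
    (Q : Matrix κ' ι' ℝ) (hF : ∀ k l, Integrable (fun x => F x k l) μ) (i : ι) (j : ι') :
    ∫ x, (P * F x * Q) i j ∂μ = (P * of (fun k l => ∫ x, F x k l ∂μ) * Q) i j := by
  simp only [mul_apply, of_apply, sum_mul]
  rw [integral_finsetSum _ fun l _ => integrable_finsetSum _ fun k _ =>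
    ((hF k l).const_mul _).mul_const _]
  refine sum_congr rfl fun l _ => ?_
  rw [integral_finsetSum _ fun k _ => ((hF k l).const_mul _).mul_const _]
  refine sum_congr rfl fun k _ => ?_
  rw [integral_mul_const, integral_const_mul]

section Gramian

variable {ι : Type*} [Fintype ι] [DecidableEq ι]

theorem Matrix.exp_smul_conj_diagonal (P : Matrix ι ι ℝ) (hP : IsUnit P) (d : ι → ℝ) (t : ℝ) :
    NormedSpace.exp (t • (P * diagonal d * P⁻¹))
      = P * diagonal (fun k => Real.exp (t * d k)) * P⁻¹ := by
  rw [← smul_mul_assoc, ← mul_smul_comm, ← diagonal_smul, exp_conj P _ hP, exp_diagonal,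
    Pi.exp_def, ← Real.exp_eq_exp_ℝ]
  rfl

theorem Matrix.exp_smul_mul_vecMulVec_mul_exp_smul_transpose (P : Matrix ι ι ℝ) (hP : IsUnit P)
    (d b : ι → ℝ) (t : ℝ) :
    NormedSpace.exp (t • (P * diagonal d * P⁻¹)) * vecMulVec b b
        * NormedSpace.exp (t • (P * diagonal d * P⁻¹)ᵀ)
      = P * vecMulVec (fun k => Real.exp (t * d k) * (P⁻¹ *ᵥ b) k)
          (fun k => Real.exp (t * d k) * (P⁻¹ *ᵥ b) k) * Pᵀ := by
  have hvec : NormedSpace.exp (t • (P * diagonal d * P⁻¹)) *ᵥ b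
      = P *ᵥ fun k => Real.exp (t * d k) * (P⁻¹ *ᵥ b) k := by
    rw [exp_smul_conj_diagonal P hP, ← mulVec_mulVec, ← mulVec_mulVec]
    exact congrArg (P *ᵥ ·) (funext fun k => mulVec_diagonal _ _ k)
  rw [← transpose_smul, exp_transpose, mul_vecMulVec_mul_transpose, mul_vecMulVec_mul_transpose,
    hvec]

theorem Matrix.gramian_conj_diagonal (P : Matrix ι ι ℝ) (hP : IsUnit P) (lam : ι → ℝ)
    (hneg : ∀ i, lam i < 0) (b : ι → ℝ) :
    (of fun i j => ∫ t in Set.Ioi (0 : ℝ),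
        (NormedSpace.exp (t • (P * diagonal lam * P⁻¹)) * vecMulVec b b
          * NormedSpace.exp (t • (P * diagonal lam * P⁻¹)ᵀ)) i j)
      = P * (of fun k l => -((P⁻¹ *ᵥ b) k * (P⁻¹ *ᵥ b) l) / (lam k + lam l)) * Pᵀ := by
  set β := P⁻¹ *ᵥ b
  set w : ℝ → ι → ℝ := fun t k => Real.exp (t * lam k) * β k
  have hsum : ∀ k l, lam k + lam l < 0 := fun k l => add_neg (hneg k) (hneg l)
  have hentry : ∀ k l, (fun t => vecMulVec (w t) (w t) k l)
      = fun t => β k * β l * Real.exp ((lam k + lam l) * t) :=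
    fun k l => funext fun t => by
      simp only [w, vecMulVec_apply, add_mul, Real.exp_add]; ring_nf
  have hintegral : (of fun k l => ∫ t in Set.Ioi (0 : ℝ), vecMulVec (w t) (w t) k l)
      = of fun k l => -(β k * β l) / (lam k + lam l) := by
    ext k l
    rw [of_apply, of_apply, hentry, integral_const_mul, integral_exp_mul_Ioi (hsum k l),
      mul_zero, Real.exp_zero]
    ring
  have hint : ∀ k l, IntegrableOn (fun t => vecMulVec (w t) (w t) k l) (Set.Ioi 0) := by
    intro k l
    rw [hentry]
    exact (integrableOn_exp_mul_Ioi (hsum k l) 0).const_mul _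
  ext i j
  simp_rw [of_apply, exp_smul_mul_vecMulVec_mul_exp_smul_transpose P hP]
  rw [integral_mul_mul_apply _ _ _ hint, hintegral]

end Gramian

theorem gramian_det_cauchy_general (n : ℕ) (lam : Fin n → ℝ)
    (hneg : ∀ i, lam i < 0)
    (P : Matrix (Fin n) (Fin n) ℝ) (hP : IsUnit P)
    (A : Matrix (Fin n) (Fin n) ℝ) (hA : A = P * Matrix.diagonal lam * P⁻¹)
    (b : Fin n → ℝ) (beta : Fin n → ℝ) (hbeta : beta = P⁻¹.mulVec b) :
    (Matrix.of fun i j : Fin n => ∫ t in Set.Ioi (0 : ℝ),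
        (NormedSpace.exp (t • A) * Matrix.vecMulVec b b
          * NormedSpace.exp (t • Aᵀ)) i j).det
      = P.det ^ 2 *
        (Matrix.of fun i j : Fin n => -(beta i * beta j) / (lam i + lam j)).det ∧
    (Matrix.of fun i j : Fin n => -(beta i * beta j) / (lam i + lam j)).det
      = (∏ i : Fin n, beta i ^ 2) *
        (∏ i : Fin n, ∏ j ∈ Finset.univ.filter (fun j => i < j), (lam i - lam j) ^ 2) /
        ∏ i : Fin n, ∏ j : Fin n, (-(lam i + lam j)) := by
  subst hA hbeta
  constructor
  · rw [gramian_conj_diagonal P hP lam hneg, det_mul, det_mul, det_transpose]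
    ring
  · simp_rw [filter_lt_eq_Ioi]
    exact det_of_neg_mul_div_add _ _ fun i j => (add_neg (hneg i) (hneg j)).ne

/-- For `A = P diag(λ) P⁻¹` with distinct negative eigenvalues and `β = P⁻¹ b`,
the Gramian `G_∞ = ∫_0^∞ e^{At} b bᵀ e^{Aᵀ t} dt` satisfies
`det G_∞ = det(P)² det(M)` with the Cauchy-type matrix `M_{ij} = -β_i β_j/(λ_i + λ_j)`,
whose determinant is given by the Cauchy determinant formula. -/
theorem gramian_det_cauchy (n : ℕ) (lam : Fin n → ℝ)
    (hinj : Function.Injective lam) (hneg : ∀ i, lam i < 0)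
    (P : Matrix (Fin n) (Fin n) ℝ) (hP : IsUnit P)
    (A : Matrix (Fin n) (Fin n) ℝ) (hA : A = P * Matrix.diagonal lam * P⁻¹)
    (b : Fin n → ℝ) (beta : Fin n → ℝ) (hbeta : beta = P⁻¹.mulVec b) :
    (Matrix.of fun i j : Fin n => ∫ t in Set.Ioi (0 : ℝ),
        (NormedSpace.exp (t • A) * Matrix.vecMulVec b b
          * NormedSpace.exp (t • Aᵀ)) i j).det
      = P.det ^ 2 *
        (Matrix.of fun i j : Fin n => -(beta i * beta j) / (lam i + lam j)).det ∧
    (Matrix.of fun i j : Fin n => -(beta i * beta j) / (lam i + lam j)).det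
      = (∏ i : Fin n, beta i ^ 2) *
        (∏ i : Fin n, ∏ j ∈ Finset.univ.filter (fun j => i < j), (lam i - lam j) ^ 2) /
        ∏ i : Fin n, ∏ j : Fin n, (-(lam i + lam j)) :=
  gramian_det_cauchy_general n lam hneg P hP A hA b beta hbeta
end

section
/- Let A ∈ ℝ^{n×n} and B ∈ ℝ^{n×1} with the controllability matrix P_n = [B, AB, ..., A^{n−1}B] invertible. Define w_1 = e_n^T P_n^{−1} (the last row of P_n^{−1}) and W_c = [w_1; w_1 A; ...; w_1 A^{n−1}]^{−1}. Then W_c^{−1} A W_c = A_c and W_c^{−1} B = e_n, where A_c is the companion matrix (controllable canonical form) of the characteristic polynomial of A (superdiagonal ones, last row the negated reversed coefficients) and e_n = (0,...,0,1)^T. -/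
open Matrix Finset

/-- The companion matrix in controllable canonical form of
`s^n + a_1 s^{n-1} + ⋯ + a_n`, where `a k` (0-based) denotes `a_{k+1}`. -/
def companion {R : Type*} [CommRing R] (n : ℕ) (a : Fin n → R) :
    Matrix (Fin n) (Fin n) R :=
  Matrix.of fun i j =>
    if (i : ℕ) + 1 = (j : ℕ) then 1
    else if (i : ℕ) = n - 1 then -a (Fin.rev j)
    else 0

/-!
Let `P = [B, AB, …, A^m B]`, let `w` be the last row of `P⁻¹` and `W` the matrix with rows
`w A^i`. From `P⁻¹ P = 1` we get `w A^k B = δ_{k,m}` for `k ≤ m`. Hence `W P = (w A^(i+j) B)` is a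
Hankel matrix that vanishes above its antidiagonal and is `1` on it, so `W` is invertible, and
`W B` (column `0` of `W P`) is `e_n`. Finally `W A = A_c W` holds for every row `w`: row `i` of
`W A` is `w A^(i+1)`, which is row `i + 1` of `W` for `i < m`, while for `i = m` Cayley–Hamilton
expresses `w A^(m+1)` through the rows of `W` with the coefficients in the last row of `A_c`.
-/

section Companion

variable {R : Type*} [CommRing R] {m : ℕ} (a : Fin (m + 1) → R)
  (M : Matrix (Fin (m + 1)) (Fin (m + 1)) R)

theorem companion_mul_castSucc (i : Fin m) : (companion (m + 1) a * M) i.castSucc = M i.succ := by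
  ext j
  rw [mul_apply, sum_eq_single i.succ]
  · simp [companion]
  · intro k _ hk
    have h_ne : (i : ℕ) + 1 ≠ k := fun h => hk (Fin.ext h.symm)
    simp [companion, h_ne, i.is_lt.ne]
  · simp

theorem companion_mul_last :
    (companion (m + 1) a * M) (Fin.last m) = -∑ k, a (Fin.rev k) • M k := by
  ext j
  have h_ne (k : Fin (m + 1)) : m + 1 ≠ k := k.is_lt.ne'
  simp [mul_apply, companion, Finset.sum_apply, h_ne]

end Companion

namespace Matrix

variable {R : Type*} [CommRing R]

theorem pow_card_eq_neg_sum_charpoly_coeff {ι : Type*} [Fintype ι] [DecidableEq ι]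
    (A : Matrix ι ι R) :
    A ^ Fintype.card ι = -∑ k ∈ range (Fintype.card ι), A.charpoly.coeff k • A ^ k := by
  nontriviality R
  have h := A.aeval_self_charpoly
  rw [A.charpoly_monic.as_sum, charpoly_natDegree_eq_dim] at h
  simpa [map_sum, Algebra.smul_def, ← eq_neg_iff_add_eq_zero] using h

theorem isUnit_det_hankel {m : ℕ} (h : ℕ → R) (h_lt : ∀ k < m, h k = 0) (h_eq : h m = 1) :
    IsUnit (of fun i j : Fin (m + 1) => h (i + j)).det := by
  set H : Matrix (Fin (m + 1)) (Fin (m + 1)) R := of fun i j => h (i + j)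
  have h_rev (i j : Fin (m + 1)) : H.submatrix Fin.revPerm id i j = h (m - i + j) := by
    simp [H, Fin.val_rev]
  have h_triangular : (H.submatrix Fin.revPerm id).IsUpperTriangular := by
    intro i j (hji : j < i)
    rw [h_rev]
    exact h_lt _ (by omega)
  have h_det :
      ((Equiv.Perm.sign (Fin.revPerm : Equiv.Perm (Fin (m + 1))) : ℤ) : R) * H.det = 1 := by
    rw [← det_permute, det_of_isUpperTriangular h_triangular]
    exact prod_eq_one fun i _ => by rw [h_rev, Nat.sub_add_cancel i.is_le, h_eq]
  exact IsUnit.of_mul_eq_one_right _ h_det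

section ControllabilityMatrix

variable {n : ℕ}

def controllabilityMatrix (A : Matrix (Fin n) (Fin n) R) (B : Fin n → R) :
    Matrix (Fin n) (Fin n) R :=
  of fun i j => (A ^ (j : ℕ) *ᵥ B) i

def observabilityMatrix (w : Fin n → R) (A : Matrix (Fin n) (Fin n) R) :
    Matrix (Fin n) (Fin n) R :=
  of fun i j => (w ᵥ* A ^ (i : ℕ)) j

theorem inv_controllabilityMatrix_dotProduct {A : Matrix (Fin n) (Fin n) R} {B : Fin n → R}
    (hP : IsUnit (controllabilityMatrix A B)) (i j : Fin n) :
    (controllabilityMatrix A B)⁻¹ i ᵥ* A ^ (j : ℕ) ⬝ᵥ B = (1 : Matrix (Fin n) (Fin n) R) i j := by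
  rw [← nonsing_inv_mul _ ((isUnit_iff_isUnit_det _).mp hP), ← dotProduct_mulVec]
  rfl

theorem observabilityMatrix_mul_controllabilityMatrix (w : Fin n → R)
    (A : Matrix (Fin n) (Fin n) R) (B : Fin n → R) :
    observabilityMatrix w A * controllabilityMatrix A B
      = of fun i j : Fin n => w ᵥ* A ^ ((i : ℕ) + j) ⬝ᵥ B := by
  ext i j
  rw [of_apply, pow_add, ← vecMul_vecMul, ← dotProduct_mulVec]
  rfl

theorem observabilityMatrix_mulVec (w : Fin n → R) (A : Matrix (Fin n) (Fin n) R)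
    (B : Fin n → R) (i : Fin n) :
    (observabilityMatrix w A *ᵥ B) i = w ᵥ* A ^ (i : ℕ) ⬝ᵥ B :=
  rfl

theorem observabilityMatrix_mul_self_row (w : Fin n → R) (A : Matrix (Fin n) (Fin n) R)
    (i : Fin n) : (observabilityMatrix w A * A) i = w ᵥ* A ^ ((i : ℕ) + 1) := by
  rw [pow_succ, ← vecMul_vecMul]
  rfl

end ControllabilityMatrix

variable {m : ℕ}

theorem observabilityMatrix_mul_eq_companion_mul (w : Fin (m + 1) → R)
    (A : Matrix (Fin (m + 1)) (Fin (m + 1)) R) :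
    observabilityMatrix w A * A
      = companion (m + 1) (fun k => A.charpoly.coeff (m - k)) * observabilityMatrix w A := by
  refine funext fun i => ?_
  induction i using Fin.lastCases with
  | last =>
    have h_coeff (k : Fin (m + 1)) : m - (Fin.rev k : ℕ) = k := by
      rw [Fin.val_rev]; omega
    have h_cayley_hamilton := A.pow_card_eq_neg_sum_charpoly_coeff
    rw [Fintype.card_fin, ← Fin.sum_univ_eq_sum_range (fun k => A.charpoly.coeff k • A ^ k)]
      at h_cayley_hamilton
    rw [observabilityMatrix_mul_self_row, companion_mul_last, Fin.val_last, h_cayley_hamilton]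
    simp only [vecMul_neg, vecMul_sum, vecMul_smul, h_coeff]
    rfl
  | cast i =>
    rw [observabilityMatrix_mul_self_row, companion_mul_castSucc]
    rfl

variable {A : Matrix (Fin (m + 1)) (Fin (m + 1)) R} {B : Fin (m + 1) → R}

theorem inv_controllabilityMatrix_last_dotProduct (hP : IsUnit (controllabilityMatrix A B))
    {k : ℕ} (hk : k ≤ m) :
    (controllabilityMatrix A B)⁻¹ (Fin.last m) ᵥ* A ^ k ⬝ᵥ B = if k = m then 1 else 0 := by
  have h := inv_controllabilityMatrix_dotProduct hP (Fin.last m) ⟨k, Nat.lt_succ_of_le hk⟩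
  simpa [one_apply, Fin.ext_iff, eq_comm] using h

theorem isUnit_det_observabilityMatrix_inv_controllabilityMatrix_last
    (hP : IsUnit (controllabilityMatrix A B)) :
    IsUnit (observabilityMatrix ((controllabilityMatrix A B)⁻¹ (Fin.last m)) A).det := by
  have h_hankel : IsUnit (observabilityMatrix ((controllabilityMatrix A B)⁻¹ (Fin.last m)) A
      * controllabilityMatrix A B).det := by
    rw [observabilityMatrix_mul_controllabilityMatrix]
    refine isUnit_det_hankel (fun k => _ ᵥ* A ^ k ⬝ᵥ B) (fun k hk => ?_) ?_
    · rw [inv_controllabilityMatrix_last_dotProduct hP hk.le, if_neg hk.ne]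
    · rw [inv_controllabilityMatrix_last_dotProduct hP le_rfl, if_pos rfl]
  rw [det_mul] at h_hankel
  exact isUnit_of_mul_isUnit_left h_hankel

theorem observabilityMatrix_inv_controllabilityMatrix_last_mulVec
    (hP : IsUnit (controllabilityMatrix A B)) :
    observabilityMatrix ((controllabilityMatrix A B)⁻¹ (Fin.last m)) A *ᵥ B
      = Pi.single (Fin.last m) 1 := by
  funext i
  rw [observabilityMatrix_mulVec, inv_controllabilityMatrix_dotProduct hP, one_apply,
    Pi.single_apply]
  exact if_congr eq_comm rfl rfl

end Matrix

/-- Transformation of a controllable single-input pair `(A, B)` to controllable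
canonical form: with `w₁` the last row of the inverse controllability matrix and
`W_c = [w₁; w₁A; …; w₁A^{n-1}]⁻¹`, one has `W_c⁻¹ A W_c = A_c` (the companion form
of the characteristic polynomial of `A`) and `W_c⁻¹ B = e_n`. -/
theorem controllable_canonical_form (m : ℕ)
    (A : Matrix (Fin (m + 1)) (Fin (m + 1)) ℝ) (B : Fin (m + 1) → ℝ)
    (hctrb : IsUnit (Matrix.of fun i j : Fin (m + 1) => (A ^ (j : ℕ)).mulVec B i)) :
    ((Matrix.of fun i j : Fin (m + 1) =>
        Matrix.vecMul
          (fun k => (Matrix.of fun i j : Fin (m + 1) => (A ^ (j : ℕ)).mulVec B i)⁻¹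
            (Fin.last m) k)
          (A ^ (i : ℕ)) j)⁻¹)⁻¹ * A *
      (Matrix.of fun i j : Fin (m + 1) =>
        Matrix.vecMul
          (fun k => (Matrix.of fun i j : Fin (m + 1) => (A ^ (j : ℕ)).mulVec B i)⁻¹
            (Fin.last m) k)
          (A ^ (i : ℕ)) j)⁻¹
      = companion (m + 1) (fun k => A.charpoly.coeff (m - (k : ℕ))) ∧
    (((Matrix.of fun i j : Fin (m + 1) =>
        Matrix.vecMul
          (fun k => (Matrix.of fun i j : Fin (m + 1) => (A ^ (j : ℕ)).mulVec B i)⁻¹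
            (Fin.last m) k)
          (A ^ (i : ℕ)) j)⁻¹)⁻¹).mulVec B
      = Pi.single (Fin.last m) 1 := by
  change IsUnit (controllabilityMatrix A B) at hctrb
  set W := observabilityMatrix ((controllabilityMatrix A B)⁻¹ (Fin.last m)) A
  change W⁻¹⁻¹ * A * W⁻¹ = _ ∧ W⁻¹⁻¹ *ᵥ B = _
  have hW : IsUnit W.det := isUnit_det_observabilityMatrix_inv_controllabilityMatrix_last hctrb
  have : Invertible W := invertibleOfIsUnitDet W hW
  rw [nonsing_inv_nonsing_inv _ hW, mul_inv_eq_iff_eq_mul_of_invertible]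
  exact ⟨observabilityMatrix_mul_eq_companion_mul _ A,
    observabilityMatrix_inv_controllabilityMatrix_last_mulVec hctrb⟩
end
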